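/- arXiv:1907.09633 — 2 statements merged into one kernel-verified Lean document; each statement's English description precedes it below -/
import Mathlib

section
/- For every inductive game tree T, the baseline-corrected sampled value of the root is an unbiased estimate of the root's expected utility: E_z[v̂(T; z)] = û(T), where the expectation is over the trajectory distribution of T. This holds for an arbitrary baseline assignment b. -/
/-- An inductive game tree: either a leaf carrying a utility `u`, or an internal node
carrying a nonempty finite action set `Fin (n+1)`, a subtree `child a` for each action,
a strategy distribution `σ`, a sampling distribution `q`, and baseline values `b`. -/
inductive GameTree : Type
  | leaf (u : ℝ) : GameTree
  | node (n : ℕ) (child : Fin (n + 1) → GameTree)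
      (σ : Fin (n + 1) → ℝ) (q : Fin (n + 1) → ℝ) (b : Fin (n + 1) → ℝ) : GameTree

namespace GameTree

/-- Expected utility `û`: `û(leaf u) = u` and `û(T) = Σ_a σ_T(a)·û(T_a)` at internal nodes. -/
noncomputable def eu : GameTree → ℝ
  | leaf u => u
  | node n child σ _ _ => ∑ a : Fin (n + 1), σ a * eu (child a)

/-- Validity: at every internal node, `σ` is a probability distribution and `q` is a
probability distribution with `q a > 0` for every action `a`. -/
def Valid : GameTree → Prop
  | leaf _ => True
  | node n child σ q _ =>
      (∀ a, 0 ≤ σ a) ∧ (∑ a : Fin (n + 1), σ a = 1) ∧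
      (∀ a, 0 < q a) ∧ (∑ a : Fin (n + 1), q a = 1) ∧
      (∀ a, Valid (child a))

/-- A sampled trajectory of `T`: a root-to-leaf path in the tree. -/
inductive Traj : GameTree → Type
  | leaf (u : ℝ) : Traj (.leaf u)
  | step {n : ℕ} {child : Fin (n + 1) → GameTree} {σ q b : Fin (n + 1) → ℝ}
      (astar : Fin (n + 1)) (t : Traj (child astar)) : Traj (.node n child σ q b)

/-- Expectation `E_z[f(z)]` over the trajectory distribution (each trajectory has the
product of the `q`-probabilities of its edges as probability). -/
noncomputable def expT : (T : GameTree) → (Traj T → ℝ) → ℝ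
  | leaf u, f => f (.leaf u)
  | node n child _ q _, f =>
      ∑ a : Fin (n + 1), q a * expT (child a) (fun t => f (.step a t))

/-- Variance `Var_z[f(z)]` over the trajectory distribution. -/
noncomputable def varT (T : GameTree) (f : Traj T → ℝ) : ℝ :=
  expT T (fun z => (f z - expT T f) ^ 2)

/-- Baseline-corrected sampled value `v̂(T; z) = Σ_a σ_T(a)·v̂(T, a; z)`, with
`v̂(T, a; z) = (𝟙[a = a*]/q_T(a))·(v̂(T_a; z') − b_T(a)) + b_T(a)`. -/
noncomputable def bval : {T : GameTree} → Traj T → ℝ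
  | _, .leaf u => u
  | _, @Traj.step n child σ q b astar t =>
      ∑ a : Fin (n + 1), σ a *
        ((if a = astar then (1 : ℝ) else 0) / q a * (bval t - b a) + b a)

/-- Baseline-corrected sampled action value `v̂(T, a; z)` at an internal root:
`(𝟙[a = a*]/q_T(a))·(v̂(T_a; z') − b_T(a)) + b_T(a)` where `z = a*·z'`. -/
noncomputable def bvalAct {n : ℕ} {child : Fin (n + 1) → GameTree}
    {σ q b : Fin (n + 1) → ℝ}
    (a : Fin (n + 1)) : Traj (.node n child σ q b) → ℝ
  | .step astar t => (if a = astar then (1 : ℝ) else 0) / q a * (bval t - b a) + b a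

end GameTree

namespace GameTree

lemma expT_affine (T : GameTree) (hV : T.Valid) (α β : ℝ) (f : Traj T → ℝ) :
    expT T (fun z => α * f z + β) = α * expT T f + β := by
  induction T with
  | leaf u => simp [expT]
  | node n child σ q b ih =>
      obtain ⟨-, -, -, hq1, hVc⟩ := hV
      simp only [expT]
      calc ∑ a : Fin (n+1), q a * expT (child a) (fun t => α * f (.step a t) + β)
          = ∑ a : Fin (n+1), (α * (q a * expT (child a) (fun t => f (.step a t))) + β * q a) := by
            refine Finset.sum_congr rfl fun a _ => ?_
            rw [ih a (hVc a)]; ring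
        _ = α * ∑ a : Fin (n+1), q a * expT (child a) (fun t => f (.step a t)) + β := by
            rw [Finset.sum_add_distrib, ← Finset.mul_sum, ← Finset.mul_sum, hq1, mul_one]

lemma expT_sum (T : GameTree) {ι : Type*} (s : Finset ι) (g : ι → Traj T → ℝ) :
    expT T (fun z => ∑ i ∈ s, g i z) = ∑ i ∈ s, expT T (g i) := by
  induction T with
  | leaf u => simp [expT]
  | node n child σ q b ih =>
      simp only [expT]
      rw [Finset.sum_comm]
      refine Finset.sum_congr rfl fun a _ => ?_
      rw [ih a (fun i t => g i (.step a t)), Finset.mul_sum]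

lemma expT_smul (T : GameTree) (c : ℝ) (f : Traj T → ℝ) :
    expT T (fun z => c * f z) = c * expT T f := by
  induction T with
  | leaf u => simp [expT]
  | node n child σ q b ih =>
      simp only [expT, Finset.mul_sum]
      refine Finset.sum_congr rfl fun a _ => ?_
      rw [ih a (fun t => f (.step a t))]; ring

end GameTree

/-- For every inductive game tree `T`, the baseline-corrected sampled
value of the root is an unbiased estimate of the root's expected utility:
`E_z[v̂(T; z)] = û(T)`, for an arbitrary baseline. -/
theorem bval_unbiased (T : GameTree) (hV : T.Valid) :
    GameTree.expT T (fun z => GameTree.bval z) = GameTree.eu T := by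
  induction T with
  | leaf u => simp [GameTree.expT, GameTree.bval, GameTree.eu]
  | node n child σ q b ih =>
      obtain ⟨hσ0, hσ1, hq0, hq1, hVc⟩ := hV
      simp only [GameTree.expT, GameTree.eu]
      have key : ∀ a : Fin (n+1),
          GameTree.expT (child a)
            (fun t => ∑ a' : Fin (n+1), σ a' *
              ((if a' = a then (1:ℝ) else 0) / q a' * (GameTree.bval t - b a') + b a'))
          = ∑ a' : Fin (n+1), σ a' *
              ((if a' = a then (1:ℝ) else 0) / q a' *
                (GameTree.expT (child a) (fun t => GameTree.bval t) - b a') + b a') := by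
        intro a
        rw [GameTree.expT_sum]
        refine Finset.sum_congr rfl fun a' _ => ?_
        have : (fun t : (child a).Traj => σ a' * ((if a' = a then (1:ℝ) else 0) / q a' *
            (GameTree.bval t - b a') + b a'))
            = fun t => (σ a' * ((if a' = a then (1:ℝ) else 0) / q a')) * GameTree.bval t
              + σ a' * ((if a' = a then (1:ℝ) else 0) / q a' * (- b a') + b a') := by
          funext t; ring
        rw [this, GameTree.expT_affine (child a) (hVc a)]
        ring
      calc ∑ a : Fin (n+1), q a * GameTree.expT (child a)
              (fun t => GameTree.bval (GameTree.Traj.step a t))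
          = ∑ a : Fin (n+1), ∑ a' : Fin (n+1), q a * (σ a' *
              ((if a' = a then (1:ℝ) else 0) / q a' *
                (GameTree.expT (child a) (fun t => GameTree.bval t) - b a') + b a')) := by
            refine Finset.sum_congr rfl fun a _ => ?_
            simp only [GameTree.bval]
            rw [key a, Finset.mul_sum]
        _ = ∑ a' : Fin (n+1), σ a' * GameTree.eu (child a') := by
            rw [Finset.sum_comm]
            refine Finset.sum_congr rfl fun a' _ => ?_
            have : ∀ a : Fin (n+1), q a * (σ a' *
                ((if a' = a then (1:ℝ) else 0) / q a' *
                  (GameTree.expT (child a) (fun t => GameTree.bval t) - b a') + b a'))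
                = (if a = a' then
                    σ a' * (GameTree.expT (child a') (fun t => GameTree.bval t) - b a')
                   else 0) + q a * (σ a' * b a') := by
              intro a
              by_cases h : a = a'
              · subst h
                simp only [if_pos rfl, eq_self_iff_true, ↓reduceIte]
                have hqa : q a ≠ 0 := (hq0 a).ne'
                field_simp
              · rw [if_neg h, if_neg (fun h' => h h'.symm)]
                ring
            simp only [this, Finset.sum_add_distrib, Finset.sum_ite_eq',
              Finset.mem_univ, if_pos]
            rw [← Finset.sum_mul, hq1, ih a' (hVc a')]
            ring
end

section
/- For every inductive game tree T and any baseline assignment b, the variance of the root's baseline-corrected value is bounded by Var_z[v̂(T; z)] ≤ Σ_{(h,a)} (π^σ(h·a))²/π^q(h·a) · (û(h_a) − b_h(a))², where the sum ranges over all pairs (h, a) of an internal node h of T and an action a ∈ A(h). -/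
namespace GameTree

/-- Weighted sum over all edges `(h, a')` of the tree of the squared baseline error,
`(πσ(h·a'))² / πq(h·a') · (û(h_{a'}) − b_h(a'))²`, where the accumulators `ps` and `pq`
carry the products of `σ`- and `q`-probabilities along the path down to the current root. -/
noncomputable def errSum (ps pq : ℝ) : GameTree → ℝ
  | leaf _ => 0
  | node n child σ q b =>
      ∑ a : Fin (n + 1),
        ((ps * σ a) ^ 2 / (pq * q a) * (eu (child a) - b a) ^ 2
          + errSum (ps * σ a) (pq * q a) (child a))

end GameTree

namespace GameTree

lemma expT_add (T : GameTree) : ∀ f g : Traj T → ℝ,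
    expT T (fun z => f z + g z) = expT T f + expT T g := by
  induction T with
  | leaf u => intro f g; simp [expT]
  | node n child s q b ih =>
      intro f g
      simp only [expT]
      rw [← Finset.sum_add_distrib]
      refine Finset.sum_congr rfl fun a _ => ?_
      rw [show (fun t => (fun z => f z + g z) (Traj.step a t))
            = fun t => f (Traj.step a t) + g (Traj.step a t) from rfl,
        ih a (fun t => f (Traj.step a t)) (fun t => g (Traj.step a t)), mul_add]

lemma expT_mul (T : GameTree) : ∀ (f : Traj T → ℝ) (c : ℝ),
    expT T (fun z => c * f z) = c * expT T f := by
  induction T with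
  | leaf u => intro f c; simp [expT]
  | node n child s q b ih =>
      intro f c
      simp only [expT]
      rw [Finset.mul_sum]
      refine Finset.sum_congr rfl fun a _ => ?_
      rw [show (fun t => (fun z => c * f z) (Traj.step a t))
            = fun t => c * f (Traj.step a t) from rfl,
        ih a (fun t => f (Traj.step a t)) c]
      ring

lemma expT_const (T : GameTree) (hV : T.Valid) : ∀ c : ℝ,
    expT T (fun _ => c) = c := by
  induction T with
  | leaf u => intro c; simp [expT]
  | node n child s q b ih =>
      intro c
      obtain ⟨_, _, _, hq1, hVc⟩ := hV
      simp only [expT]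
      have : ∀ a : Fin (n+1), q a * expT (child a) (fun _ => c) = q a * c := by
        intro a; rw [ih a (hVc a) c]
      rw [Finset.sum_congr rfl fun a _ => this a, ← Finset.sum_mul, hq1, one_mul]

lemma expT_quad (T : GameTree) (hV : T.Valid) (f : Traj T → ℝ) (α β γ : ℝ) :
    expT T (fun z => α * f z ^ 2 + β * f z + γ)
      = α * expT T (fun z => f z ^ 2) + β * expT T f + γ := by
  have h1 : expT T (fun z => α * f z ^ 2 + β * f z + γ)
      = expT T (fun z => α * f z ^ 2 + β * f z) + expT T (fun _ => γ) :=
    expT_add T (fun z => α * f z ^ 2 + β * f z) (fun _ => γ)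
  rw [h1, expT_add T (fun z => α * f z ^ 2) (fun z => β * f z),
    expT_mul T (fun z => f z ^ 2) α, expT_mul T f β, expT_const T hV γ]

lemma errSum_scale (T : GameTree) (hV : T.Valid) : ∀ ps pq : ℝ, 0 < pq →
    errSum ps pq T = ps ^ 2 / pq * errSum 1 1 T := by
  induction T with
  | leaf u => intro ps pq _; simp [errSum]
  | node n child s q b ih =>
      intro ps pq hpq
      obtain ⟨_, _, hq0, _, hVc⟩ := hV
      simp only [errSum]
      rw [Finset.mul_sum]
      refine Finset.sum_congr rfl fun a _ => ?_
      rw [ih a (hVc a) (ps * s a) (pq * q a) (mul_pos hpq (hq0 a)),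
        ih a (hVc a) ((1:ℝ) * s a) ((1:ℝ) * q a) (by simpa using hq0 a)]
      have hqa : q a ≠ 0 := (hq0 a).ne'
      have hpq' : pq ≠ 0 := hpq.ne'
      field_simp

lemma bval_step {n : ℕ} {child : Fin (n+1) → GameTree} {s q b : Fin (n+1) → ℝ}
    (astar : Fin (n+1)) (t : Traj (child astar)) :
    bval (Traj.step (σ := s) (q := q) (b := b) astar t)
      = s astar / q astar * (bval t - b astar) + ∑ a, s a * b a := by
  simp only [bval, mul_add]
  rw [Finset.sum_add_distrib]
  congr 1
  have h : ∀ a : Fin (n+1),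
      s a * ((if a = astar then (1:ℝ) else 0) / q a * (bval t - b a))
        = if a = astar then s astar / q astar * (bval t - b astar) else 0 := by
    intro a
    by_cases h : a = astar
    · subst h; simp; ring
    · simp [h]
  rw [Finset.sum_congr rfl fun a _ => h a, Finset.sum_ite_eq' Finset.univ astar]
  simp

lemma key (T : GameTree) (hV : T.Valid) :
    expT T (fun z => bval z) = eu T ∧
      expT T (fun z => bval z ^ 2) ≤ eu T ^ 2 + errSum 1 1 T := by
  induction T with
  | leaf u =>
      constructor
      · simp [expT, bval, eu]
      · simp [expT, bval, eu, errSum]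
  | node n child s q b ih =>
      obtain ⟨hs0, hs1, hq0, hq1, hVc⟩ := hV
      set C : ℝ := ∑ a, s a * b a with hC
      -- rewrite bval on step trajectories as a quadratic in bval t
      have hfun1 : ∀ a : Fin (n+1),
          (fun t : Traj (child a) =>
              bval (Traj.step (σ := s) (q := q) (b := b) a t))
            = fun t => (0:ℝ) * bval t ^ 2 + (s a / q a) * bval t
                + (C - s a / q a * b a) := by
        intro a; funext t; rw [bval_step]; ring
      have hfun2 : ∀ a : Fin (n+1),
          (fun t : Traj (child a) =>
              bval (Traj.step (σ := s) (q := q) (b := b) a t) ^ 2)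
            = fun t => (s a / q a) ^ 2 * bval t ^ 2
                + (2 * (s a / q a) * (C - s a / q a * b a)) * bval t
                + (C - s a / q a * b a) ^ 2 := by
        intro a; funext t; rw [bval_step]; ring
      have hE1 : ∀ a : Fin (n+1),
          expT (child a) (fun t =>
              bval (Traj.step (σ := s) (q := q) (b := b) a t))
            = s a / q a * (eu (child a) - b a) + C := by
        intro a
        rw [hfun1 a, expT_quad (child a) (hVc a) (fun t => bval t),
          (ih a (hVc a)).1]
        ring
      have hE2 : ∀ a : Fin (n+1),
          expT (child a) (fun t =>
              bval (Traj.step (σ := s) (q := q) (b := b) a t) ^ 2)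
            = (s a / q a) ^ 2 * expT (child a) (fun t => bval t ^ 2)
              + (2 * (s a / q a) * (C - s a / q a * b a)) * eu (child a)
              + (C - s a / q a * b a) ^ 2 := by
        intro a
        rw [hfun2 a, expT_quad (child a) (hVc a) (fun t => bval t),
          (ih a (hVc a)).1]
      constructor
      · -- unbiasedness
        show (∑ a, q a * expT (child a) (fun t =>
            bval (Traj.step (σ := s) (q := q) (b := b) a t))) = eu (.node n child s q b)
        have : ∀ a : Fin (n+1), a ∈ Finset.univ →
            q a * expT (child a) (fun t =>
                bval (Traj.step (σ := s) (q := q) (b := b) a t))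
              = s a * eu (child a) - s a * b a + q a * C := by
          intro a _
          rw [hE1 a]
          have hqa : q a ≠ 0 := (hq0 a).ne'
          field_simp
        rw [Finset.sum_congr rfl this]
        simp only [eu]
        rw [Finset.sum_add_distrib, Finset.sum_sub_distrib, ← Finset.sum_mul, hq1]
        rw [← hC]
        ring
      · -- second moment bound
        show (∑ a, q a * expT (child a) (fun t =>
            bval (Traj.step (σ := s) (q := q) (b := b) a t) ^ 2))
          ≤ eu (.node n child s q b) ^ 2 + errSum 1 1 (.node n child s q b)
        have hS : errSum 1 1 (GameTree.node n child s q b)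
            = ∑ a, (s a ^ 2 / q a * ((eu (child a) - b a) ^ 2
                + errSum 1 1 (child a))) := by
          simp only [errSum]
          refine Finset.sum_congr rfl fun a _ => ?_
          rw [errSum_scale (child a) (hVc a) (1 * s a) (1 * q a)
            (by simpa using hq0 a)]
          have hqa : q a ≠ 0 := (hq0 a).ne'
          field_simp
        have hstep : ∀ a : Fin (n+1), a ∈ Finset.univ →
            q a * expT (child a) (fun t =>
                bval (Traj.step (σ := s) (q := q) (b := b) a t) ^ 2)
              ≤ s a ^ 2 / q a * ((eu (child a) - b a) ^ 2 + errSum 1 1 (child a))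
                + (2 * s a * eu (child a) * C + q a * C ^ 2 - 2 * s a * b a * C) := by
          intro a _
          rw [hE2 a]
          have hqa : q a ≠ 0 := (hq0 a).ne'
          have hM2 : expT (child a) (fun t => bval t ^ 2)
              ≤ eu (child a) ^ 2 + errSum 1 1 (child a) := (ih a (hVc a)).2
          have hkey : q a * ((s a / q a) ^ 2 * (eu (child a) ^ 2 + errSum 1 1 (child a))
              + (2 * (s a / q a) * (C - s a / q a * b a)) * eu (child a)
              + (C - s a / q a * b a) ^ 2)
            = s a ^ 2 / q a * ((eu (child a) - b a) ^ 2 + errSum 1 1 (child a))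
              + (2 * s a * eu (child a) * C + q a * C ^ 2 - 2 * s a * b a * C) := by
            field_simp
            ring
          calc q a * ((s a / q a) ^ 2 * expT (child a) (fun t => bval t ^ 2)
                + (2 * (s a / q a) * (C - s a / q a * b a)) * eu (child a)
                + (C - s a / q a * b a) ^ 2)
              ≤ q a * ((s a / q a) ^ 2 * (eu (child a) ^ 2 + errSum 1 1 (child a))
                + (2 * (s a / q a) * (C - s a / q a * b a)) * eu (child a)
                + (C - s a / q a * b a) ^ 2) := by
                have hq' : 0 ≤ q a := (hq0 a).le
                have h2 : (s a / q a) ^ 2 * expT (child a) (fun t => bval t ^ 2)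
                    ≤ (s a / q a) ^ 2 * (eu (child a) ^ 2 + errSum 1 1 (child a)) :=
                  mul_le_mul_of_nonneg_left hM2 (sq_nonneg _)
                nlinarith [mul_le_mul_of_nonneg_left h2 hq']
            _ = _ := hkey
        have hsum := Finset.sum_le_sum hstep
        rw [Finset.sum_add_distrib, ← hS] at hsum
        refine hsum.trans ?_
        have e0 : (∑ a, 2 * s a * eu (child a) * C)
            = 2 * C * ∑ a, s a * eu (child a) := by
          rw [Finset.mul_sum]; exact Finset.sum_congr rfl fun a _ => by ring
        have e1 : (∑ a : Fin (n+1), q a * C ^ 2) = C ^ 2 := by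
          rw [← Finset.sum_mul, hq1, one_mul]
        have e2 : (∑ a, 2 * s a * b a * C) = 2 * C * C := by
          calc (∑ a, 2 * s a * b a * C) = (∑ a, s a * b a) * (2 * C) := by
                rw [Finset.sum_mul]; exact Finset.sum_congr rfl fun a _ => by ring
            _ = 2 * C * C := by rw [← hC]; ring
        have hlin : (∑ a, (2 * s a * eu (child a) * C + q a * C ^ 2
            - 2 * s a * b a * C)) = 2 * C * eu (.node n child s q b) - C ^ 2 := by
          simp only [eu]
          rw [Finset.sum_sub_distrib, Finset.sum_add_distrib, e0, e1, e2]
          ring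
        rw [hlin]
        nlinarith [sq_nonneg (eu (.node n child s q b) - C)]

end GameTree

/-- For every game tree and arbitrary baseline, the variance of the
root's baseline-corrected value is bounded by
`Var_z[v̂(T; z)] ≤ Σ_{(h,a)} (π^σ(h·a))²/π^q(h·a) · (û(h_a) − b_h(a))²`,
the sum ranging over all pairs of an internal node `h` of `T` and an action `a ∈ A(h)`
(initial accumulators `1`). -/
theorem var_le_errSum (T : GameTree) (hV : T.Valid) :
    GameTree.varT T (fun z => GameTree.bval z) ≤ GameTree.errSum 1 1 T := by
  obtain ⟨h1, h2⟩ := GameTree.key T hV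
  set E := GameTree.expT T (fun z => GameTree.bval z) with hE
  have hvar : GameTree.varT T (fun z => GameTree.bval z)
      = GameTree.expT T (fun z => GameTree.bval z ^ 2) - E ^ 2 := by
    unfold GameTree.varT
    have hfun : (fun z : GameTree.Traj T => ((fun z => GameTree.bval z) z - E) ^ 2)
        = fun z => (1:ℝ) * GameTree.bval z ^ 2 + (-(2*E)) * GameTree.bval z + E ^ 2 := by
      funext z; ring
    rw [← hE, hfun, GameTree.expT_quad T hV (fun z => GameTree.bval z) 1 (-(2*E)) (E^2),
      ← hE]
    ring
  rw [hvar, h1] at *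
  linarith
end
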